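/- arXiv:1611.07592 — 2 statements merged into one kernel-verified Lean document; each statement's English description precedes it below -/
import Mathlib

section
/- Let G be a finite connected reflexive graph with V(G) = V_1 ∪ ⋯ ∪ V_t, where each induced subgraph G[V_i] is a retract of G, and let k = k_1 + ⋯ + k_t where k_i ≥ c(G[V_i]) for every i. Then capt_k(G) ≤ max_{i ∈ [t]} capt_{k_i}(G[V_i]). -/
open SimpleGraph Finset

/-- One step of a player in a reflexive graph: stay put (the loop) or move along an edge. -/
def stepRel {V : Type*} (G : SimpleGraph V) (u v : V) : Prop := u = v ∨ G.Adj u v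

/-- `CatchIn G t c r`: with the cops currently at positions `c` and the robber at `r`
(cops to move next), the cops can guarantee to capture the robber within `t` further
rounds (a round consists of a cops' move followed by a robber's move; capture means
some cop occupies the robber's vertex). -/
def CatchIn {V : Type*} (G : SimpleGraph V) {k : ℕ} : ℕ → (Fin k → V) → V → Prop
  | 0, c, r => ∃ i, c i = r
  | (t + 1), c, r => (∃ i, c i = r) ∨
      ∃ c' : Fin k → V, (∀ i, stepRel G (c i) (c' i)) ∧
        ((∃ i, c' i = r) ∨ ∀ r', stepRel G r r' → CatchIn G t c' r')

/-- `k` cops have a strategy capturing the robber within `t` rounds (not counting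
round 0, in which the cops choose starting positions and then the robber, knowing
the cops' positions, chooses hers). -/
def CopsWinIn {V : Type*} (G : SimpleGraph V) (k t : ℕ) : Prop :=
  ∃ c₀ : Fin k → V, ∀ r₀ : V, CatchIn G t c₀ r₀

/-- The cop number: the least `k` such that `k` cops have a winning strategy. -/
noncomputable def copNumber {V : Type*} (G : SimpleGraph V) : ℕ :=
  sInf {k | ∃ t, CopsWinIn G k t}

/-- The `k`-capture time: the least `t` such that `k` cops can guarantee capture
within `t` rounds. -/
noncomputable def captTime {V : Type*} (G : SimpleGraph V) (k : ℕ) : ℕ :=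
  sInf {t | CopsWinIn G k t}

/-- The metric `k`-center radius: the least `r` such that some set of at most `k`
vertices is within distance `r` of every vertex. -/
noncomputable def radK {V : Type*} (G : SimpleGraph V) (k : ℕ) : ℕ :=
  sInf {r | ∃ S : Finset V, S.Nonempty ∧ S.card ≤ k ∧ ∀ v, ∃ s ∈ S, G.dist v s ≤ r}

/-- `H ⊆ V(G)` induces a retract of the reflexive graph `G`: there is a map
`f : V(G) → H` fixing `H` pointwise such that every edge `uv` of `G` is sent to a
single vertex or to an edge. -/
def IsRetract {V : Type*} (G : SimpleGraph V) (H : Set V) : Prop :=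
  ∃ f : V → V, (∀ v, f v ∈ H) ∧ (∀ v ∈ H, f v = v) ∧
    ∀ u v, G.Adj u v → f u = f v ∨ G.Adj (f u) (f v)

/- ----------------- auxiliary lemmas ----------------- -/

lemma stepRel_refl {V : Type*} (G : SimpleGraph V) (v : V) : stepRel G v v := Or.inl rfl

lemma catchIn_zero_iff {V : Type*} (G : SimpleGraph V) {k : ℕ} (c : Fin k → V) (r : V) :
    CatchIn G 0 c r ↔ ∃ i, c i = r := Iff.rfl

lemma catchIn_succ_iff {V : Type*} (G : SimpleGraph V) {k : ℕ} (t : ℕ) (c : Fin k → V) (r : V) :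
    CatchIn G (t + 1) c r ↔ (∃ i, c i = r) ∨
      ∃ c' : Fin k → V, (∀ i, stepRel G (c i) (c' i)) ∧
        ((∃ i, c' i = r) ∨ ∀ r', stepRel G r r' → CatchIn G t c' r') := Iff.rfl

lemma stepRel_coe {V : Type*} {G : SimpleGraph V} {S : Set V} {u v : S}
    (h : stepRel (G.induce S) u v) : stepRel G (u : V) (v : V) := by
  rcases h with h | h
  · exact Or.inl (congrArg _ h)
  · exact Or.inr (by simpa using h)

lemma shadow_step {V : Type*} {G : SimpleGraph V} {S : Set V} {f : V → V}
    (hmem : ∀ v, f v ∈ S)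
    (hedge : ∀ u v, G.Adj u v → f u = f v ∨ G.Adj (f u) (f v))
    {r r' : V} (h : stepRel G r r') :
    stepRel (G.induce S) ⟨f r, hmem r⟩ ⟨f r', hmem r'⟩ := by
  rcases h with rfl | h
  · exact Or.inl rfl
  · rcases hedge _ _ h with h' | h'
    · exact Or.inl (Subtype.ext h')
    · exact Or.inr (by simpa using h')

lemma catchIn_add_one {V : Type*} {G : SimpleGraph V} {k : ℕ} :
    ∀ (t : ℕ) (c : Fin k → V) (r : V), CatchIn G t c r → CatchIn G (t + 1) c r
  | 0, c, r, h => Or.inl h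
  | (t + 1), c, r, h => by
      rcases h with h | ⟨c', hs, hcap⟩
      · exact Or.inl h
      · refine Or.inr ⟨c', hs, ?_⟩
        rcases hcap with hcap | hall
        · exact Or.inl hcap
        · exact Or.inr fun r' hr' => catchIn_add_one t c' r' (hall r' hr')

lemma catchIn_mono {V : Type*} {G : SimpleGraph V} {k : ℕ} {t t' : ℕ} (h : t ≤ t')
    {c : Fin k → V} {r : V} (hc : CatchIn G t c r) : CatchIn G t' c r := by
  induction h with
  | refl => exact hc
  | step _ ih => exact catchIn_add_one _ _ _ ih

lemma catchIn_comp {V : Type*} {G : SimpleGraph V} {k k' : ℕ} (π : Fin k' → Fin k)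
    (hπ : Function.Surjective π) :
    ∀ (t : ℕ) (c : Fin k → V) (r : V), CatchIn G t c r → CatchIn G t (c ∘ π) r
  | 0, c, r, ⟨i, hi⟩ => by
      obtain ⟨a, ha⟩ := hπ i
      exact ⟨a, by rw [Function.comp_apply, ha, hi]⟩
  | (t + 1), c, r, h => by
      rcases h with ⟨i, hi⟩ | ⟨c', hs, hcap⟩
      · obtain ⟨a, ha⟩ := hπ i
        exact Or.inl ⟨a, by rw [Function.comp_apply, ha, hi]⟩
      · refine Or.inr ⟨c' ∘ π, fun a => hs (π a), ?_⟩
        rcases hcap with ⟨i, hi⟩ | hall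
        · obtain ⟨a, ha⟩ := hπ i
          exact Or.inl ⟨a, by rw [Function.comp_apply, ha, hi]⟩
        · exact Or.inr fun r' hr' => catchIn_comp π hπ t c' r' (hall r' hr')

lemma not_catchIn_zero_cops {V : Type*} {G : SimpleGraph V} :
    ∀ (t : ℕ) (c : Fin 0 → V) (r : V), ¬ CatchIn G t c r
  | 0, _, _, ⟨i, _⟩ => i.elim0
  | (t + 1), c, r, h => by
      rcases h with ⟨i, _⟩ | ⟨c', _, hcap⟩
      · exact i.elim0
      rcases hcap with ⟨i, _⟩ | hall
      · exact i.elim0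
      · exact not_catchIn_zero_cops t c' r (hall r (Or.inl rfl))

/-- If some cop is within one step of `σ`, then the cops catch a robber sitting at `σ`
within `t + 1` rounds (move that cop onto `σ`). -/
lemma catchIn_near {V : Type*} {G : SimpleGraph V} {k : ℕ} {c : Fin k → V} {σ : V}
    (h : ∃ a, stepRel G (c a) σ) (t : ℕ) : CatchIn G (t + 1) c σ := by
  classical
  obtain ⟨a, ha⟩ := h
  refine Or.inr ⟨Function.update c a σ, fun j => ?_, Or.inl ⟨a, by simp⟩⟩
  by_cases hj : j = a
  · subst hj; simpa using ha
  · simp [Function.update_of_ne hj, stepRel]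

/-- The key induction: if each team of cops either still has a live `T`-round guarantee
against its shadow, or already has a cop sitting on its shadow, then the combined cops
catch the real robber within `T` rounds. -/
lemma main_claim {V : Type*} (G : SimpleGraph V) {t : ℕ} (Vs : Fin t → Set V)
    (hcover : ∀ v, ∃ i, v ∈ Vs i)
    (f : Fin t → V → V) (hmem : ∀ i v, f i v ∈ Vs i)
    (hfix : ∀ i, ∀ v ∈ Vs i, f i v = v)
    (hedge : ∀ i u v, G.Adj u v → f i u = f i v ∨ G.Adj (f i u) (f i v))
    {ks : Fin t → ℕ} {K : ℕ} (e : (Σ i, Fin (ks i)) ≃ Fin K) :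
    ∀ (T : ℕ) (c : Fin K → V) (r : V) (d : ∀ i, Fin (ks i) → (Vs i))
      (_ : ∀ i (j : Fin (ks i)), c (e ⟨i, j⟩) = (d i j : V))
      (_ : ∀ i, CatchIn (G.induce (Vs i)) T (d i) ⟨f i r, hmem i r⟩
              ∨ ∃ j, ((d i j : V) = f i r)),
      CatchIn G T c r := by
  intro T
  induction T with
  | zero =>
    intro c r d hcd hinv
    obtain ⟨i₀, hr₀⟩ := hcover r
    have hfr : f i₀ r = r := hfix i₀ r hr₀
    rw [catchIn_zero_iff]
    rcases hinv i₀ with H | ⟨j, hj⟩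
    · rw [catchIn_zero_iff] at H
      obtain ⟨j, hj⟩ := H
      exact ⟨e ⟨i₀, j⟩, by rw [hcd i₀ j, congrArg Subtype.val hj]; exact hfr⟩
    · exact ⟨e ⟨i₀, j⟩, by rw [hcd i₀ j, hj]; exact hfr⟩
  | succ T ih =>
    intro c r d hcd hinv
    obtain ⟨i₀, hr₀⟩ := hcover r
    have hfr : f i₀ r = r := hfix i₀ r hr₀
    have capture_now : ∀ j : Fin (ks i₀), (d i₀ j : V) = f i₀ r → CatchIn G (T + 1) c r :=
      fun j hj => Or.inl ⟨e ⟨i₀, j⟩, by rw [hcd i₀ j, hj]; exact hfr⟩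
    rcases hinv i₀ with H | ⟨j, hj⟩
    swap
    · exact capture_now j hj
    rw [catchIn_succ_iff] at H
    rcases H with ⟨j, hj⟩ | ⟨d₀', hs₀, hcap⟩
    · exact capture_now j (congrArg Subtype.val hj)
    -- mid-round capture helper: if team i₀'s move lands a cop on the (fixed) shadow `r`
    have mid : (∃ j, d₀' j = (⟨f i₀ r, hmem i₀ r⟩ : Vs i₀)) → CatchIn G (T + 1) c r := by
      rintro ⟨j, hj⟩
      refine catchIn_near ⟨e ⟨i₀, j⟩, ?_⟩ T
      rw [hcd i₀ j]
      have hstep : stepRel G ((d i₀ j : V)) ((d₀' j : V)) := stepRel_coe (hs₀ j)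
      rw [hj] at hstep
      rwa [show ((⟨f i₀ r, hmem i₀ r⟩ : Vs i₀) : V) = r from hfr] at hstep
    rcases hcap with hmidc | hall
    · exact mid hmidc
    cases T with
    | zero =>
      have h0 := hall ⟨f i₀ r, hmem i₀ r⟩ (Or.inl rfl)
      rw [catchIn_zero_iff] at h0
      exact mid h0
    | succ S =>
      have key : ∀ i, ∃ d'' : Fin (ks i) → (Vs i),
          (∀ j, stepRel (G.induce (Vs i)) (d i j) (d'' j)) ∧
          ∀ r', stepRel G r r' →
            (CatchIn (G.induce (Vs i)) (S + 1) d'' ⟨f i r', hmem i r'⟩ ∨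
             ∃ j, ((d'' j : V) = f i r')) := by
        intro i
        by_cases hii : i = i₀
        · subst hii
          exact ⟨d₀', hs₀,
            fun r' hr' => Or.inl (hall _ (shadow_step (hmem i) (hedge i) hr'))⟩
        · have near : ∀ (dd : Fin (ks i) → (Vs i)),
              (∃ j, dd j = (⟨f i r, hmem i r⟩ : Vs i)) →
              ∀ r', stepRel G r r' →
                CatchIn (G.induce (Vs i)) (S + 1) dd ⟨f i r', hmem i r'⟩ := by
            rintro dd ⟨j, hj⟩ r' hr'
            refine catchIn_near ⟨j, ?_⟩ S
            rw [hj]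
            exact shadow_step (hmem i) (hedge i) hr'
          rcases hinv i with H | ⟨j, hj⟩
          · rw [catchIn_succ_iff] at H
            rcases H with ⟨j, hj⟩ | ⟨di', hsi, hci⟩
            · exact ⟨d i, fun j => stepRel_refl _ _,
                fun r' hr' => Or.inl (near (d i) ⟨j, hj⟩ r' hr')⟩
            · rcases hci with ⟨j, hj⟩ | halli
              · exact ⟨di', hsi, fun r' hr' => Or.inl (near di' ⟨j, hj⟩ r' hr')⟩
              · exact ⟨di', hsi,
                  fun r' hr' => Or.inl (halli _ (shadow_step (hmem i) (hedge i) hr'))⟩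
          · exact ⟨d i, fun j => stepRel_refl _ _,
              fun r' hr' => Or.inl (near (d i) ⟨j, Subtype.ext hj⟩ r' hr')⟩
      choose D hstep hpost using key
      refine Or.inr ⟨fun a => (D (e.symm a).1 (e.symm a).2 : V), fun a => ?_, Or.inr ?_⟩
      · have hca : c a = ((d (e.symm a).1 (e.symm a).2 : V)) := by
          have h := hcd (e.symm a).1 (e.symm a).2
          rwa [Sigma.eta, e.apply_symm_apply] at h
        rw [hca]
        exact stepRel_coe (hstep _ _)
      · intro r' hr'
        refine ih _ r' D (fun i j => congrArg (fun p : Σ i, Fin (ks i) => ((D p.1 p.2 : V))) (e.symm_apply_apply ⟨i, j⟩)) (fun i => hpost i r' hr')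

/-- If `V(G) = V_1 ∪ ⋯ ∪ V_t` where each `G[V_i]` is a retract of `G`, and
`k = k_1 + ⋯ + k_t` with `k_i ≥ c(G[V_i])` for every `i`, then
`capt_k(G) ≤ max_i capt_{k_i}(G[V_i])`. -/
theorem captTime_le_of_retract_cover {V : Type*} [Fintype V] (G : SimpleGraph V)
    (hG : G.Connected) (t : ℕ) (Vs : Fin t → Set V)
    (hcover : ∀ v : V, ∃ i, v ∈ Vs i)
    (hret : ∀ i, IsRetract G (Vs i))
    (ks : Fin t → ℕ) (hks : ∀ i, copNumber (G.induce (Vs i)) ≤ ks i) :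
    captTime G (∑ i, ks i) ≤ Finset.univ.sup (fun i => captTime (G.induce (Vs i)) (ks i)) := by
  classical
  have hV : Nonempty V := hG.nonempty
  choose f hmem hfix hedge using hret
  set T := Finset.univ.sup (fun i => captTime (G.induce (Vs i)) (ks i)) with hT
  have hwin : ∀ i, ∃ c₀ : Fin (ks i) → (Vs i),
      ∀ σ : (Vs i), CatchIn (G.induce (Vs i)) T c₀ σ := by
    intro i
    haveI : Nonempty (Vs i) := ⟨⟨f i (Classical.arbitrary V), hmem i _⟩⟩
    haveI : Fintype (Vs i) := Fintype.ofFinite _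
    have hne : {k | ∃ t', CopsWinIn (G.induce (Vs i)) k t'}.Nonempty := by
      refine ⟨Fintype.card (Vs i), 0, (Fintype.equivFin (Vs i)).symm, fun r₀ => ?_⟩
      exact ⟨(Fintype.equivFin (Vs i)) r₀, by simp⟩
    obtain ⟨t₁, c₁, hc₁⟩ := Nat.sInf_mem hne
    have hpos : 0 < copNumber (G.induce (Vs i)) := by
      rcases Nat.eq_zero_or_pos (copNumber (G.induce (Vs i))) with h0 | h
      · exfalso
        obtain ⟨σ⟩ := (inferInstance : Nonempty (Vs i))
        have h0' : copNumber (G.induce (Vs i)) = 0 := h0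
        exact not_catchIn_zero_cops t₁ _ σ
          (catchIn_comp (finCongr h0'.symm) (finCongr h0'.symm).surjective t₁ c₁ σ (hc₁ σ))
      · exact h
    -- upgrade to `ks i` cops
    have hsurj : ∃ π : Fin (ks i) → Fin (copNumber (G.induce (Vs i))), Function.Surjective π := by
      refine ⟨fun a => if h : (a : ℕ) < copNumber (G.induce (Vs i)) then ⟨a, h⟩ else ⟨0, hpos⟩, ?_⟩
      intro b
      refine ⟨⟨(b : ℕ), lt_of_lt_of_le b.2 (hks i)⟩, ?_⟩
      simp [b.2]
    obtain ⟨π, hπ⟩ := hsurj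
    have hwin1 : CopsWinIn (G.induce (Vs i)) (ks i) t₁ :=
      ⟨c₁ ∘ π, fun σ => catchIn_comp π hπ t₁ c₁ σ (hc₁ σ)⟩
    have hne2 : {t' | CopsWinIn (G.induce (Vs i)) (ks i) t'}.Nonempty := ⟨t₁, hwin1⟩
    obtain ⟨c₀, hc₀⟩ := Nat.sInf_mem hne2
    have hle : captTime (G.induce (Vs i)) (ks i) ≤ T := by
      rw [hT]
      exact Finset.le_sup (f := fun i => captTime (G.induce (Vs i)) (ks i)) (Finset.mem_univ i)
    exact ⟨c₀, fun σ => catchIn_mono hle (hc₀ σ)⟩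
  choose c₀ hc₀ using hwin
  have e : (Σ i, Fin (ks i)) ≃ Fin (∑ i, ks i) :=
    (Fintype.equivFin _).trans (finCongr (by simp))
  apply Nat.sInf_le
  refine ⟨fun a => (c₀ (e.symm a).1 (e.symm a).2 : V), fun r₀ => ?_⟩
  exact main_claim G Vs hcover f hmem hfix hedge e T _ r₀ c₀
    (fun i j => congrArg (fun p : Σ i, Fin (ks i) => ((c₀ p.1 p.2 : V))) (e.symm_apply_apply ⟨i, j⟩))
    (fun i => Or.inl (hc₀ i ⟨f i r₀, hmem i r₀⟩))
end

section
/- Let n, d ∈ ℕ and let k be an integer with c(Q_n) ≤ k and k < 2^n / (∑_{i=0}^d C(n, i)). Then capt_k(Q_n) > d. -/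
open SimpleGraph Finset

/-- The hypercube `Q n`: vertices are binary strings of length `n`, adjacent iff they
differ in exactly one coordinate (loops at every vertex are implicit). -/
def hypercube (n : ℕ) : SimpleGraph (Fin n → Bool) :=
  SimpleGraph.fromRel (fun u v => ∃ j, u j ≠ v j ∧ ∀ i, i ≠ j → u i = v i)

/-!
If `k` cops capture every robber within `d` rounds, then in particular they capture a robber who
never moves; since a cop moves at most one step per round, every vertex lies within Hamming
distance `d` of some cop's starting vertex. Thus `k` Hamming balls of radius `d`, each of size
at most `∑_{i ≤ d} C(n, i)`, cover all `2^n` vertices of `Q_n`.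
-/

namespace CatchIn

variable {V : Type*} {G : SimpleGraph V} {k : ℕ}

lemma mono {t t' : ℕ} (htt' : t ≤ t') {c : Fin k → V} {r : V} (h : CatchIn G t c r) :
    CatchIn G t' c r := by
  induction t generalizing t' c r with
  | zero =>
    cases t' with
    | zero => exact h
    | succ t' => exact Or.inl h
  | succ t ih =>
    obtain _ | t' := t'
    · omega
    rcases h with h | ⟨c', hstep, h | h⟩
    · exact Or.inl h
    · exact Or.inr ⟨c', hstep, Or.inl h⟩
    · exact Or.inr ⟨c', hstep, Or.inr fun r' hr' => ih (by omega) (h r' hr')⟩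

lemma comp_surjective {k' : ℕ} {σ : Fin k → Fin k'} (hσ : σ.Surjective) {t : ℕ}
    {c : Fin k' → V} {r : V} (h : CatchIn G t c r) : CatchIn G t (c ∘ σ) r := by
  induction t generalizing c r with
  | zero => exact hσ.exists.mp h
  | succ t ih =>
    rcases h with h | ⟨c', hstep, h | h⟩
    · exact Or.inl (hσ.exists.mp h)
    · exact Or.inr ⟨c' ∘ σ, fun j => hstep (σ j), Or.inl (hσ.exists.mp h)⟩
    · exact Or.inr ⟨c' ∘ σ, fun j => hstep (σ j), Or.inr fun r' hr' => ih (h r' hr')⟩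

lemma exists_edist_le {t : ℕ} {c : Fin k → V} {r : V} (h : CatchIn G t c r) :
    ∃ i, G.edist (c i) r ≤ t := by
  induction t generalizing c r with
  | zero =>
    obtain ⟨i, rfl⟩ := h
    exact ⟨i, by simp⟩
  | succ t ih =>
    have hstep_edist {u v : V} (huv : stepRel G u v) : G.edist u v ≤ 1 :=
      edist_le_one_iff_adj_or_eq.mpr huv.symm
    rcases h with ⟨i, rfl⟩ | ⟨c', hstep, ⟨i, rfl⟩ | h⟩
    · exact ⟨i, by simp⟩
    · exact ⟨i, (hstep_edist (hstep i)).trans (by norm_cast; omega)⟩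
    · -- the robber stays put
      obtain ⟨i, hi⟩ := ih (h r (Or.inl rfl))
      refine ⟨i, (G.edist_triangle (v := c' i)).trans ?_⟩
      calc G.edist (c i) (c' i) + G.edist (c' i) r ≤ 1 + t :=
            add_le_add (hstep_edist (hstep i)) hi
        _ = (t + 1 : ℕ) := by push_cast; ring

end CatchIn

namespace CopsWinIn

variable {V : Type*} {G : SimpleGraph V} {k t : ℕ}

lemma mono_cops {k' : ℕ} (hk : 0 < k) (hkk' : k ≤ k') (h : CopsWinIn G k t) :
    CopsWinIn G k' t := by
  have : Nonempty (Fin k) := ⟨⟨0, hk⟩⟩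
  obtain ⟨c, hc⟩ := h
  exact ⟨c ∘ Function.invFun (Fin.castLE hkk'),
    fun r => (hc r).comp_surjective (Function.invFun_surjective (Fin.castLE_injective hkk'))⟩

lemma pos [Nonempty V] (h : CopsWinIn G k t) : 0 < k := by
  obtain ⟨c, hc⟩ := h
  obtain ⟨i, -⟩ := (hc (Classical.arbitrary V)).exists_edist_le
  exact i.pos

end CopsWinIn

section Capture

variable {V : Type*} {G : SimpleGraph V} {k : ℕ}

lemma copsWinIn_card [Fintype V] : CopsWinIn G (Fintype.card V) 0 :=
  ⟨(Fintype.equivFin V).symm, fun r => ⟨Fintype.equivFin V r, by simp⟩⟩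

lemma exists_copsWinIn_of_copNumber_le [Fintype V] [Nonempty V] (h : copNumber G ≤ k) :
    ∃ t, CopsWinIn G k t := by
  obtain ⟨t, ht⟩ := Nat.sInf_mem (s := {k | ∃ t, CopsWinIn G k t}) ⟨_, 0, copsWinIn_card⟩
  exact ⟨t, ht.mono_cops ht.pos h⟩

lemma lt_captTime_of_not_copsWinIn {d : ℕ} (hwin : ∃ t, CopsWinIn G k t)
    (hd : ¬ CopsWinIn G k d) : d < captTime G k := by
  by_contra! hle
  obtain ⟨c, hc⟩ := Nat.sInf_mem hwin
  exact hd ⟨c, fun r => (hc r).mono hle⟩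

end Capture

section Hamming

variable {ι : Type*} [Fintype ι]

lemma injective_filter_ne (u : ι → Bool) :
    Function.Injective fun v : ι → Bool => ({j | u j ≠ v j} : Finset ι) := by
  intro v w hvw
  funext j
  have := congrArg (j ∈ ·) hvw
  simp only [mem_filter, mem_univ, true_and] at this
  revert this
  cases u j <;> cases v j <;> cases w j <;> simp

lemma card_hammingBall_le [DecidableEq ι] (u : ι → Bool) (d : ℕ) :
    #{v | hammingDist u v ≤ d} ≤ ∑ i ∈ range (d + 1), (Fintype.card ι).choose i := by
  calc #{v | hammingDist u v ≤ d}
      ≤ #((range (d + 1)).biUnion fun i => powersetCard i (univ : Finset ι)) := by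
        refine card_le_card_of_injOn (fun v => ({j | u j ≠ v j} : Finset ι)) (fun v hv => ?_)
          (injective_filter_ne u).injOn
        simp only [mem_coe, mem_filter, mem_univ, true_and] at hv
        simp only [coe_biUnion, coe_range, Set.mem_Iio, mem_coe, mem_powersetCard,
          subset_univ, true_and, Set.mem_iUnion, exists_prop]
        exact ⟨_, Nat.lt_succ_of_le hv, rfl⟩
    _ ≤ _ := card_biUnion_le.trans (by simp [card_powersetCard])

lemma two_pow_card_le_of_forall_exists_hammingDist_le [DecidableEq ι] {k d : ℕ}
    (c : Fin k → ι → Bool) (hc : ∀ v, ∃ i, hammingDist (c i) v ≤ d) :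
    2 ^ Fintype.card ι ≤ k * ∑ i ∈ range (d + 1), (Fintype.card ι).choose i := by
  calc 2 ^ Fintype.card ι = #(univ : Finset (ι → Bool)) := by simp
    _ ≤ #(univ.biUnion fun i => ({v | hammingDist (c i) v ≤ d} : Finset (ι → Bool))) :=
        card_le_card fun v _ => by simpa using hc v
    _ ≤ ∑ i, #{v | hammingDist (c i) v ≤ d} := card_biUnion_le
    _ ≤ ∑ _i : Fin k, ∑ i ∈ range (d + 1), (Fintype.card ι).choose i :=
        sum_le_sum fun i _ => card_hammingBall_le (c i) d
    _ = _ := by simp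

end Hamming

section Hypercube

variable {n : ℕ} {u v : Fin n → Bool}

lemma hammingDist_le_one_of_hypercube_adj (h : (hypercube n).Adj u v) : hammingDist u v ≤ 1 := by
  obtain ⟨j, hj⟩ : ∃ j, ∀ i, i ≠ j → u i = v i := by
    obtain ⟨-, ⟨j, -, hj⟩ | ⟨j, -, hj⟩⟩ := h
    exacts [⟨j, hj⟩, ⟨j, fun i hi => (hj i hi).symm⟩]
  refine card_le_one.mpr fun a ha b hb => ?_
  simp only [mem_filter, mem_univ, true_and] at ha hb
  rw [not_imp_comm.mp (hj a) ha, not_imp_comm.mp (hj b) hb]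

lemma hammingDist_le_length (p : (hypercube n).Walk u v) : hammingDist u v ≤ p.length := by
  induction p with
  | nil => simp
  | @cons u v w h _ ih =>
    rw [Walk.length_cons]
    have := hammingDist_le_one_of_hypercube_adj h
    exact (hammingDist_triangle u v w).trans (by omega)

lemma hammingDist_le_edist_hypercube : (hammingDist u v : ℕ∞) ≤ (hypercube n).edist u v := by
  rw [edist_eq_sInf]
  exact le_sInf (Set.forall_mem_range.2 fun p => by exact_mod_cast hammingDist_le_length p)

lemma not_copsWinIn_hypercube {k d : ℕ}
    (h : k * ∑ i ∈ range (d + 1), n.choose i < 2 ^ n) : ¬ CopsWinIn (hypercube n) k d := by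
  rintro ⟨c, hc⟩
  refine h.not_ge ?_
  simpa using two_pow_card_le_of_forall_exists_hammingDist_le c fun r => by
    obtain ⟨i, hi⟩ := (hc r).exists_edist_le
    exact ⟨i, by exact_mod_cast hammingDist_le_edist_hypercube.trans hi⟩

end Hypercube

/-- Lower bound on the capture time of hypercubes with many cops: if
`c(Q_n) ≤ k < 2^n / ∑_{i=0}^d C(n,i)`, then `capt_k(Q_n) > d`. -/
theorem captTime_hypercube_lower_large (n d k : ℕ)
    (hk : copNumber (hypercube n) ≤ k)
    (hk' : (k : ℝ) < (2 : ℝ) ^ n / ∑ i ∈ Finset.range (d + 1), (n.choose i : ℝ)) :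
    d < captTime (hypercube n) k := by
  have hball_pos : (0 : ℝ) < ∑ i ∈ range (d + 1), (n.choose i : ℝ) := by
    rw [sum_range_succ', Nat.choose_zero_right, Nat.cast_one]
    positivity
  rw [lt_div_iff₀ hball_pos] at hk'
  exact lt_captTime_of_not_copsWinIn (exists_copsWinIn_of_copNumber_le hk)
    (not_copsWinIn_hypercube (by exact_mod_cast hk'))
end
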